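/- Every family of distributions induced by an AHK model is projective. Let L_Int be a finite relational vocabulary of maximal arity a ≥ 1 and L_Ext ⊆ L_Int. Given an AHK model — a family of i.i.d. uniform [0,1] random variables U_{(i_1,...,i_m)} indexed by strictly increasing tuples of naturals of length 0 ≤ m ≤ a, together with permutation-equivariant measurable functions f_m mapping the collection of pairs (U-value, extensional data of arity n) over all increasing subsequences of length n ≤ m to intensional data of arity m — the induced L_Ext-L_Int family of distributions (which assigns to each finite L_Ext-structure D on {a_1,...,a_n} and each L_Int-expansion X the probability that the functions f output exactly the intensional data of X on all increasing tuples) is projective: its marginals are invariant under embeddings of L_Ext-structures. -/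

import Mathlib

open MeasureTheory

/-- An `L`-structure on domain `D`: an interpretation of each relation symbol `R`
(of arity `ar R`) as a set of `ar R`-tuples from `D`. -/
def Struc (L : Type) (ar : L → ℕ) (D : Type) : Type :=
  ∀ R : L, (Fin (ar R) → D) → Prop

/-- `ω` (a structure on `D`) extends the image of `X` (a structure on `D'`) along the
injection `ι`; equivalently, `ι` is an embedding of structures from `X` to `ω`. -/
def ExtendsAlong {L : Type} {ar : L → ℕ} {D' D : Type} (ι : D' ↪ D)
    (X : Struc L ar D') (ω : Struc L ar D) : Prop :=
  ∀ (R : L) (s : Fin (ar R) → D'), ω R (fun i => ι (s i)) ↔ X R s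

/-- Transport of a structure along a bijection. -/
def Struc.map {L : Type} {ar : L → ℕ} {D D' : Type} (e : D ≃ D')
    (X : Struc L ar D) : Struc L ar D' :=
  fun R t => X R (fun i => e.symm (t i))

/-- The reduct of a structure to a subvocabulary `E`. -/
def reduct {L : Type} {ar : L → ℕ} (E : Set L) {D : Type} (X : Struc L ar D) :
    Struc ↥E (fun R => ar ↑R) D :=
  fun R t => X ↑R t

/-- A family of distributions indexed by all finite sets is projective if marginals
are invariant under injections. -/
def Projective {L : Type} {ar : L → ℕ}
    (P : ∀ (D : Type) [Fintype D], PMF (Struc L ar D)) : Prop :=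
  ∀ (D' D : Type) [Fintype D'] [Fintype D] (ι : D' ↪ D) (X : Struc L ar D'),
    P D' X = (P D).toOuterMeasure {ω | ExtendsAlong ι X ω}

/-- A structured (`S`-input, `T`-output) family of distributions is projective if
marginals are invariant under embeddings of input structures. -/
def ProjFam {S T : Type} {arS : S → ℕ} {arT : T → ℕ}
    (P : ∀ (D : Type) [Fintype D], Struc S arS D → PMF (Struc T arT D)) : Prop :=
  ∀ (D' D : Type) [Fintype D'] [Fintype D] (ι : D' ↪ D)
    (A' : Struc S arS D') (A : Struc S arS D), ExtendsAlong ι A' A →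
    ∀ X : Struc T arT D',
      P D' A' X = (P D A).toOuterMeasure {ω | ExtendsAlong ι X ω}

open scoped ENNReal

/-- Strictly increasing `n`-tuples from `Fin m`. -/
abbrev Inc (n m : ℕ) : Type := {s : Fin n → Fin m // StrictMono s}

/-- Index set for the i.i.d. uniform random variables of an AHK model: strictly
increasing tuples of naturals of length at most `a`. -/
def Idx (a : ℕ) : Type := Σ k : Fin (a + 1), {t : Fin (k : ℕ) → ℕ // StrictMono t}

/-- Extensional data of arity `n`: for each extensional relation symbol, the literals
using exactly the `n` given variables (no equality). -/
def ExtData (L : Type) (ar : L → ℕ) (E : Set L) (n : ℕ) : Type :=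
  ∀ R : ↥E, {t : Fin (ar ↑R) → Fin n // Function.Surjective t} → Prop

/-- Purely intensional data of arity `m`. -/
def IntData (L : Type) (ar : L → ℕ) (E : Set L) (m : ℕ) : Type :=
  ∀ R : {R : L // R ∉ E}, {t : Fin (ar ↑R) → Fin m // Function.Surjective t} → Prop

instance (L : Type) (ar : L → ℕ) (E : Set L) (n : ℕ) :
    MeasurableSpace (ExtData L ar E n) := ⊤

instance (L : Type) (ar : L → ℕ) (E : Set L) (m : ℕ) :
    MeasurableSpace (IntData L ar E m) := ⊤

/-- The input of the AHK function `f_m`: for every `n ≤ m` and every strictly increasing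
subsequence of length `n`, a value in `[0,1]` (a real) together with extensional data of
arity `n`. -/
abbrev AHKInput (L : Type) (ar : L → ℕ) (E : Set L) (m : ℕ) : Type :=
  ∀ n : Fin (m + 1), Inc (n : ℕ) m → ℝ × ExtData L ar E (n : ℕ)

/-- The action of a permutation of the `m` variables on the input of `f_m`. -/
noncomputable def permInput {L : Type} {ar : L → ℕ} {E : Set L} {m : ℕ}
    (e : Equiv.Perm (Fin m)) (g : AHKInput L ar E m) : AHKInput L ar E m :=
  fun n s =>
    let c : Fin (n : ℕ) → Fin m := fun i => e (s.1 i)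
    let σ : Equiv.Perm (Fin (n : ℕ)) := Tuple.sort c
    let p := g n ⟨fun i => c (σ i),
      (Tuple.monotone_sort c).strictMono_of_injective
        ((e.injective.comp s.2.injective).comp σ.injective)⟩
    (p.1, fun R t => p.2 R ⟨fun i => σ.symm (t.1 i), σ.symm.surjective.comp t.2⟩)

/-- The action of a permutation of the `m` variables on intensional data of arity `m`. -/
def permInt {L : Type} {ar : L → ℕ} {E : Set L} {m : ℕ}
    (e : Equiv.Perm (Fin m)) (ψ : IntData L ar E m) : IntData L ar E m :=
  fun R t => ψ R ⟨fun i => e (t.1 i), e.surjective.comp t.2⟩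

attribute [local instance] Classical.propDecidable

/-- An AHK model for `L_Int` over `L_Ext`, with maximal arity `a`: measurable,
permutation-equivariant functions `f_m` producing the intensional data of arity `m`. -/
structure AHKModel (L : Type) (ar : L → ℕ) (E : Set L) (a : ℕ) where
  f : ∀ m : ℕ, m ≤ a → AHKInput L ar E m → IntData L ar E m
  measurable : ∀ m hm, Measurable (f m hm)
  equivariant : ∀ m hm (e : Equiv.Perm (Fin m)) g,
    f m hm (permInput e g) = permInt e (f m hm g)

/-- The arguments handed to `f_m` at the increasing tuple `j` of elements of the domain
`Fin n`: the uniform random variables attached to the increasing subsequences of `j`,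
together with the extensional data of `A` there. -/
noncomputable def ahkArgs {L : Type} {ar : L → ℕ} {E : Set L} {a : ℕ} {Ω : Type}
    (U : Idx a → Ω → ℝ) (w : Ω) {n m : ℕ} (hm : m ≤ a)
    (A : Struc ↥E (fun R => ar ↑R) (Fin n)) (j : Fin m → Fin n) (hj : StrictMono j) :
    AHKInput L ar E m :=
  fun k s =>
    (U ⟨⟨(k : ℕ), by have := k.isLt; omega⟩,
        ⟨fun i => ((j (s.1 i) : Fin n) : ℕ), fun x y h => hj (s.2 h)⟩⟩ w,
     fun R t => A R (fun i => j (s.1 (t.1 i))))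

/-- The random structure generated by the AHK model: extensional relations are read off
from `A`, and each purely intensional atom is determined by the output of `f_m` on the
increasing enumeration of the elements occurring in it. -/
noncomputable def ahkStruc {L : Type} {ar : L → ℕ} {E : Set L} {a : ℕ} {Ω : Type}
    (Mo : AHKModel L ar E a) (ha : ∀ R : L, ar R ≤ a)
    (U : Idx a → Ω → ℝ) (w : Ω) {n : ℕ}
    (A : Struc ↥E (fun R => ar ↑R) (Fin n)) : Struc L ar (Fin n) :=
  fun R t =>
    if hR : R ∈ E then A ⟨R, hR⟩ t
    else
      let s : Finset (Fin n) := Finset.image t Finset.univ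
      let oi := s.orderIsoOfFin rfl
      have hm : s.card ≤ a := le_trans (le_trans Finset.card_image_le (by simp)) (ha R)
      Mo.f s.card hm
        (ahkArgs U w hm A (fun i => ↑(oi i)) (fun x y h => oi.strictMono h))
        ⟨R, hR⟩
        ⟨fun i => oi.symm ⟨t i, Finset.mem_image.mpr ⟨i, Finset.mem_univ i, rfl⟩⟩, by
          intro y
          obtain ⟨i, -, hi⟩ := Finset.mem_image.mp (oi y).2
          have h2 : (⟨t i, Finset.mem_image.mpr ⟨i, Finset.mem_univ i, rfl⟩⟩ : ↥s) = oi y :=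
            Subtype.ext hi
          exact ⟨i, by simpa using congrArg oi.symm h2⟩⟩

/-
Pull the uniform variables back along `ι`: the structure that the model builds on `A'` from
the relabelled family `U ∘ Idx.map ι` is, for every outcome, the pullback along `ι` of the
structure it builds on `A` from `U`. On an atom `R (ι ∘ s)` the two computations feed `f_m` the
same inputs up to the permutation sorting `ι ∘ j₀`, which equivariance absorbs. Since
`Idx.map ι` is injective, `U ∘ Idx.map ι` is again i.i.d. uniform, so both families have the
same joint law (the infinite product measure), and the event "the induced structure is `X`" is
a measurable function of the joint family.
-/

lemma ProbabilityTheory.iIndepFun.map_precomp_eq {ι Ω β : Type*} [MeasurableSpace Ω]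
    [MeasurableSpace β] {μ : Measure Ω} [IsProbabilityMeasure μ] {X : ι → Ω → β}
    (hX : ∀ i, Measurable (X i)) (hind : iIndepFun X μ) {g : ι → ι}
    (hg : Function.Injective g) (hlaw : ∀ i, μ.map (X (g i)) = μ.map (X i)) :
    μ.map (fun ω i => X (g i) ω) = μ.map (fun ω i => X i ω) := by
  rw [(hind.precomp hg).map_fun_eq_infinitePi_map (fun i => hX (g i)),
    hind.map_fun_eq_infinitePi_map hX]
  congr 1
  exact funext hlaw

lemma exists_strictMono_comp_surjective {α : Type*} [LinearOrder α] {p : ℕ} (s : Fin p → α) :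
    ∃ (m : ℕ) (j : Fin m → α) (u : Fin p → Fin m),
      StrictMono j ∧ Function.Surjective u ∧ j ∘ u = s := by
  classical
  set oi := (Finset.image s Finset.univ).orderIsoOfFin rfl
  have hmem : ∀ i, s i ∈ Finset.image s Finset.univ := fun i => by simp
  refine ⟨_, fun i => oi i, fun i => oi.symm ⟨s i, hmem i⟩, fun x y h => oi.strictMono h,
    fun y => ?_, funext fun i => by simp⟩
  obtain ⟨i, -, hi⟩ := Finset.mem_image.mp (oi y).2
  exact ⟨i, oi.symm_apply_eq.mpr (Subtype.ext hi)⟩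

lemma strictMono_comp_sort {α : Type*} [LinearOrder α] {k : ℕ} {t : Fin k → α}
    (ht : Function.Injective t) :
    StrictMono (t ∘ Tuple.sort t) :=
  (Tuple.monotone_sort t).strictMono_of_injective (ht.comp (Tuple.sort t).injective)

section Relabel

variable {a : ℕ}

def natExtend {n' n : ℕ} (ι : Fin n' ↪ Fin n) (i : ℕ) : ℕ :=
  if h : i < n' then ι ⟨i, h⟩ else n + i

lemma natExtend_val {n' n : ℕ} (ι : Fin n' ↪ Fin n) (x : Fin n') :
    natExtend ι x = ι x := by
  simp [natExtend]

lemma natExtend_injective {n' n : ℕ} (ι : Fin n' ↪ Fin n) :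
    Function.Injective (natExtend ι) := by
  intro x y h
  unfold natExtend at h
  split_ifs at h with hx hy hy
  · exact congrArg Fin.val (ι.injective (Fin.val_injective h))
  · have := (ι ⟨x, hx⟩).isLt; omega
  · have := (ι ⟨y, hy⟩).isLt; omega
  · omega

/-- The model on `Fin n` uses `U (Idx.map ι x)` where the model on `Fin n'` uses `U x`;
`natExtend` only serves to make `Idx.map ι` injective on all of `Idx a`. -/
def Idx.map {n' n : ℕ} (ι : Fin n' ↪ Fin n) (x : Idx a) : Idx a :=
  ⟨x.1, _, strictMono_comp_sort ((natExtend_injective ι).comp x.2.2.injective)⟩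

lemma Idx.map_mk {n' n : ℕ} (ι : Fin n' ↪ Fin n) {k : Fin (a + 1)}
    {t : Fin k → ℕ} (ht : StrictMono t) {g : Fin k → ℕ} (hg : StrictMono g)
    (hrange : Set.range g = Set.range (natExtend ι ∘ t)) :
    Idx.map ι ⟨k, t, ht⟩ = ⟨k, g, hg⟩ := by
  refine congrArg (Sigma.mk k) (Subtype.ext ?_)
  rw [← (strictMono_comp_sort ((natExtend_injective ι).comp ht.injective)).range_inj hg, hrange]
  exact (Tuple.sort _).surjective.range_comp _

lemma Idx.map_injective {n' n : ℕ} (ι : Fin n' ↪ Fin n) :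
    Function.Injective (Idx.map (a := a) ι) := by
  rintro ⟨k, t, ht⟩ ⟨k', t', ht'⟩ h
  obtain ⟨rfl, h⟩ := Sigma.mk.inj_iff.mp h
  have hrange :=
    congrArg (fun g : {g : Fin k → ℕ // StrictMono g} => Set.range g.1) (eq_of_heq h)
  simp only [Set.range_comp, (Tuple.sort _).surjective.range_comp] at hrange
  obtain rfl : t = t' :=
    (ht.range_inj ht').mp (Set.image_injective.mpr (natExtend_injective ι) hrange)
  rfl

end Relabel

section Model

variable {L : Type} {ar : L → ℕ} {E : Set L} {a : ℕ} {Ω : Type}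

lemma ahkStruc_apply_of_comp_eq (Mo : AHKModel L ar E a) (ha : ∀ R : L, ar R ≤ a)
    (U : Idx a → Ω → ℝ) (w : Ω) {n : ℕ} (A : Struc ↥E (fun R => ar ↑R) (Fin n))
    {R : L} (hR : R ∉ E) {t : Fin (ar R) → Fin n} {m : ℕ} (hm : m ≤ a)
    {j : Fin m → Fin n} (hj : StrictMono j) {u : Fin (ar R) → Fin m}
    (hu : Function.Surjective u) (hju : j ∘ u = t) :
    ahkStruc Mo ha U w A R t = Mo.f m hm (ahkArgs U w hm A j hj) ⟨R, hR⟩ ⟨u, hu⟩ := by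
  have himage : Finset.image t Finset.univ = Finset.image j Finset.univ := by
    rw [← hju, ← Finset.image_image, Finset.image_univ_of_surjective hu]
  have hcard : (Finset.image t Finset.univ).card = m := by
    rw [himage, Finset.card_image_of_injective _ hj.injective, Finset.card_univ,
      Fintype.card_fin]
  subst hcard
  obtain rfl : j = (Finset.image t Finset.univ).orderEmbOfFin rfl :=
    Finset.orderEmbOfFin_unique rfl (fun x => himage ▸ Finset.mem_image_of_mem j (by simp)) hj
  simp only [ahkStruc, dif_neg hR]
  congr
  funext i
  rw [OrderIso.symm_apply_eq]
  exact Subtype.ext ((Finset.coe_orderIsoOfFin_apply _ _ _).trans (congrFun hju i)).symm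

lemma permInput_ahkArgs (U : Idx a → Ω → ℝ) (w : Ω) {n' n m : ℕ} (hm : m ≤ a)
    {ι : Fin n' ↪ Fin n} {A' : Struc ↥E (fun R => ar ↑R) (Fin n')}
    {A : Struc ↥E (fun R => ar ↑R) (Fin n)} (hA : ExtendsAlong ι A' A)
    {j₀ : Fin m → Fin n'} (hj₀ : StrictMono j₀) {j : Fin m → Fin n} (hj : StrictMono j)
    (e : Equiv.Perm (Fin m)) (he : ∀ i, j (e i) = ι (j₀ i)) :
    permInput e (ahkArgs U w hm A j hj) =
      ahkArgs (fun i => U (Idx.map ι i)) w hm A' j₀ hj₀ := by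
  funext k s
  refine Prod.ext ?_ (funext fun R => funext fun t => ?_)
  · refine congrArg (U · w) (Idx.map_mk ι _ _ ?_).symm
    simp only [Function.comp_def, natExtend_val, ← he]
    exact (Tuple.sort _).surjective.range_comp (fun i => (j (e (s.1 i)) : ℕ))
  · simp only [permInput, ahkArgs, Equiv.apply_symm_apply, he]
    exact propext (hA R _)

lemma ahkStruc_map_apply (Mo : AHKModel L ar E a) (ha : ∀ R : L, ar R ≤ a)
    (U : Idx a → Ω → ℝ) (w : Ω) {n' n : ℕ} {ι : Fin n' ↪ Fin n}
    {A' : Struc ↥E (fun R => ar ↑R) (Fin n')} {A : Struc ↥E (fun R => ar ↑R) (Fin n)}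
    (hA : ExtendsAlong ι A' A) (R : L) (s : Fin (ar R) → Fin n') :
    ahkStruc Mo ha (fun i => U (Idx.map ι i)) w A' R s =
      ahkStruc Mo ha U w A R (fun i => ι (s i)) := by
  by_cases hR : R ∈ E
  · simp only [ahkStruc, dif_pos hR]
    exact propext (hA ⟨R, hR⟩ s).symm
  obtain ⟨m, j₀, u, hj₀, hu, rfl⟩ := exists_strictMono_comp_surjective s
  have hm : m ≤ a := by
    simpa using (Fintype.card_le_of_surjective u hu).trans (by simpa using ha R)
  set σ := Tuple.sort (ι ∘ j₀)
  have hj : StrictMono (ι ∘ j₀ ∘ σ) :=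
    (Tuple.monotone_sort _).strictMono_of_injective
      ((ι.injective.comp hj₀.injective).comp σ.injective)
  rw [ahkStruc_apply_of_comp_eq Mo ha _ w A' hR hm hj₀ hu rfl,
    ahkStruc_apply_of_comp_eq Mo ha U w A hR hm hj (σ.symm.surjective.comp hu)
      (funext fun i => by simp),
    ← permInput_ahkArgs U w hm hA hj₀ hj σ.symm (fun i => by simp), Mo.equivariant]
  rfl

lemma extendsAlong_ahkStruc_iff (Mo : AHKModel L ar E a) (ha : ∀ R : L, ar R ≤ a)
    (U : Idx a → Ω → ℝ) (w : Ω) {n' n : ℕ} {ι : Fin n' ↪ Fin n}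
    {A' : Struc ↥E (fun R => ar ↑R) (Fin n')} {A : Struc ↥E (fun R => ar ↑R) (Fin n)}
    (hA : ExtendsAlong ι A' A) (X : Struc L ar (Fin n')) :
    ExtendsAlong ι X (ahkStruc Mo ha U w A) ↔
      ahkStruc Mo ha (fun i => U (Idx.map ι i)) w A' = X := by
  simp only [ExtendsAlong, ← ahkStruc_map_apply Mo ha U w hA]
  exact ⟨fun h => funext fun R => funext fun s => propext (h R s), fun h R s => h ▸ Iff.rfl⟩

lemma measurable_ahkArgs {n m : ℕ} (hm : m ≤ a) (A : Struc ↥E (fun R => ar ↑R) (Fin n))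
    {j : Fin m → Fin n} (hj : StrictMono j) :
    Measurable fun v : Idx a → ℝ => ahkArgs (fun i (_ : Unit) => v i) () hm A j hj :=
  measurable_pi_lambda _ fun _ => measurable_pi_lambda _ fun _ =>
    (measurable_pi_apply _).prodMk measurable_const

lemma measurable_ahkStruc_apply (Mo : AHKModel L ar E a) (ha : ∀ R : L, ar R ≤ a) {n : ℕ}
    (A : Struc ↥E (fun R => ar ↑R) (Fin n)) (R : L) (t : Fin (ar R) → Fin n) :
    Measurable fun v : Idx a → ℝ => ahkStruc Mo ha (fun i (_ : Unit) => v i) () A R t := by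
  by_cases hR : R ∈ E
  · simp only [ahkStruc, dif_pos hR]
    exact measurable_const
  · simp only [ahkStruc, dif_neg hR]
    exact (measurable_from_top (f := fun d : IntData L ar E _ => d ⟨R, hR⟩ _)).comp
      ((Mo.measurable _ _).comp (measurable_ahkArgs _ A _))

lemma measurableSet_ahkStruc_eq [Countable L] (Mo : AHKModel L ar E a)
    (ha : ∀ R : L, ar R ≤ a) {n : ℕ} (A : Struc ↥E (fun R => ar ↑R) (Fin n))
    (X : Struc L ar (Fin n)) :
    MeasurableSet {v : Idx a → ℝ | ahkStruc Mo ha (fun i (_ : Unit) => v i) () A = X} := by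
  have hset : {v : Idx a → ℝ | ahkStruc Mo ha (fun i (_ : Unit) => v i) () A = X} =
      ⋂ R, ⋂ t, {v | ahkStruc Mo ha (fun i (_ : Unit) => v i) () A R t = X R t} := by
    ext v
    simp only [Set.mem_ofPred_eq, Set.mem_iInter]
    exact ⟨fun h R t => h ▸ rfl, fun h => funext fun R => funext (h R)⟩
  rw [hset]
  exact .iInter fun R => .iInter fun t =>
    measurable_ahkStruc_apply Mo ha A R t (measurableSet_singleton (X R t))

end Model

theorem stmt15_general {L : Type} [Fintype L] (ar : L → ℕ) (E : Set L)
    (a : ℕ) (ha : ∀ R : L, ar R ≤ a)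
    {Ω : Type} [MeasurableSpace Ω] (μ : Measure Ω) [IsProbabilityMeasure μ]
    (U : Idx a → Ω → ℝ) (hUmeas : ∀ i, Measurable (U i))
    (hiid : ProbabilityTheory.iIndepFun
      (m := fun _ : Idx a => (inferInstance : MeasurableSpace ℝ)) U μ)
    (hunif : ∀ i, μ.map (U i) = volume.restrict (Set.Icc (0 : ℝ) 1))
    (Mo : AHKModel L ar E a) :
    ∀ (n' n : ℕ) (ι : Fin n' ↪ Fin n)
      (A' : Struc ↥E (fun R => ar ↑R) (Fin n'))
      (A : Struc ↥E (fun R => ar ↑R) (Fin n)),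
      ExtendsAlong ι A' A →
      ∀ X : Struc L ar (Fin n'),
        μ {w | ahkStruc Mo ha U w A' = X} =
          μ {w | ExtendsAlong ι X (ahkStruc Mo ha U w A)} := by
  intro n' n ι A' A hA X
  have hS := measurableSet_ahkStruc_eq Mo ha A' X
  have hlaw : ∀ i, μ.map (U (Idx.map ι i)) = μ.map (U i) :=
    fun i => (hunif _).trans (hunif i).symm
  calc μ {w | ahkStruc Mo ha U w A' = X}
      = μ.map (fun w i => U i w) {v | ahkStruc Mo ha (fun i (_ : Unit) => v i) () A' = X} :=
        (Measure.map_apply (measurable_pi_lambda _ hUmeas) hS).symm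
    _ = μ.map (fun w i => U (Idx.map ι i) w)
          {v | ahkStruc Mo ha (fun i (_ : Unit) => v i) () A' = X} := by
        rw [hiid.map_precomp_eq hUmeas (Idx.map_injective ι) hlaw]
    _ = μ {w | ahkStruc Mo ha (fun i => U (Idx.map ι i)) w A' = X} :=
        Measure.map_apply (measurable_pi_lambda _ fun i => hUmeas _) hS
    _ = μ {w | ExtendsAlong ι X (ahkStruc Mo ha U w A)} := by
        simp only [extendsAlong_ahkStruc_iff Mo ha U _ hA]

/-- the family of distributions induced by an AHK model (via i.i.d.
uniform `[0,1]` random variables and the permutation-equivariant functions `f_m`) is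
projective: its marginals are invariant under embeddings of extensional structures. -/
theorem stmt15 {L : Type} [Fintype L] (ar : L → ℕ) (E : Set L)
    (a : ℕ) (ha : ∀ R : L, ar R ≤ a) (ha1 : 1 ≤ a)
    {Ω : Type} [MeasurableSpace Ω] (μ : Measure Ω) [IsProbabilityMeasure μ]
    (U : Idx a → Ω → ℝ) (hUmeas : ∀ i, Measurable (U i))
    (hiid : ProbabilityTheory.iIndepFun
      (m := fun _ : Idx a => (inferInstance : MeasurableSpace ℝ)) U μ)
    (hunif : ∀ i, μ.map (U i) = volume.restrict (Set.Icc (0 : ℝ) 1))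
    (Mo : AHKModel L ar E a) :
    ∀ (n' n : ℕ) (ι : Fin n' ↪ Fin n)
      (A' : Struc ↥E (fun R => ar ↑R) (Fin n'))
      (A : Struc ↥E (fun R => ar ↑R) (Fin n)),
      ExtendsAlong ι A' A →
      ∀ X : Struc L ar (Fin n'),
        μ {w | ahkStruc Mo ha U w A' = X} =
          μ {w | ExtendsAlong ι X (ahkStruc Mo ha U w A)} :=
  stmt15_general ar E a ha μ U hUmeas hiid hunif Mo
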